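/- arXiv:1507.03034 — 8 statements merged into one kernel-verified Lean document; each statement's English description precedes it below -/
import Mathlib

section
/- Let x_1, ..., x_r be a linear basis of ℝ^r. Then there exist positive integers m_1, ..., m_r such that the vector x = Σ_i m_i x_i satisfies ⟨x, x_i⟩ > 0 for all i = 1, ..., r. -/
/-!
The point `v` of the simplex spanned by `x₁, …, x_r` nearest to the origin is nonzero by linear
independence, and the obtuse-angle characterisation of nearest points gives
`⟪v, x_i⟫ ≥ ‖v‖² > 0`. Write `v = ∑ t_i x_i` with `t_i ≥ 0`. The condition on `v` is open and
invariant under positive scaling, and `(⌊N t_i⌋ + 1) / N → t_i`, so `m_i = ⌊N t_i⌋ + 1` works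
for `N` large.
-/

open Filter Topology
open scoped InnerProductSpace

theorem tendsto_nat_floor_mul_add_one_div_atTop {a : ℝ} (ha : 0 ≤ a) :
    Tendsto (fun N : ℕ ↦ ((⌊N * a⌋₊ + 1 : ℕ) : ℝ) / N) atTop (𝓝 a) := by
  have hfloor : Tendsto (fun N : ℕ ↦ (⌊a * N⌋₊ : ℝ) / N) atTop (𝓝 a) :=
    (tendsto_nat_floor_mul_div_atTop ha).comp tendsto_natCast_atTop_atTop
  simpa [add_div, mul_comm] using hfloor.add tendsto_one_div_atTop_nhds_zero_nat

theorem exists_pos_nat_sum_smul_mem_of_isOpen {E ι : Type*} [AddCommGroup E] [Module ℝ E]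
    [TopologicalSpace E] [ContinuousAdd E] [ContinuousSMul ℝ E] [Fintype ι] {U : Set E}
    (hU : IsOpen U) (hsmul : ∀ c : ℝ, 0 < c → ∀ y ∈ U, c • y ∈ U) (x : ι → E) {t : ι → ℝ}
    (ht : ∀ j, 0 ≤ t j) (htU : ∑ j, t j • x j ∈ U) :
    ∃ m : ι → ℕ, (∀ j, 0 < m j) ∧ ∑ j, (m j : ℝ) • x j ∈ U := by
  set m : ℕ → ι → ℕ := fun N j ↦ ⌊N * t j⌋₊ + 1
  have hlim : Tendsto (fun N : ℕ ↦ ∑ j, ((m N j : ℝ) / N) • x j) atTop (𝓝 (∑ j, t j • x j)) :=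
    tendsto_finsetSum _ fun j _ ↦ (tendsto_nat_floor_mul_add_one_div_atTop (ht j)).smul_const _
  obtain ⟨N, hNU, hN⟩ := ((hlim.eventually (hU.mem_nhds htU)).and (eventually_gt_atTop 0)).exists
  refine ⟨m N, fun j ↦ Nat.succ_pos _, ?_⟩
  convert hsmul N (by exact_mod_cast hN) _ hNU using 1
  have hN' : (N : ℝ) ≠ 0 := Nat.cast_ne_zero.mpr hN.ne'
  simp only [Finset.smul_sum, smul_smul, mul_div_cancel₀ _ hN']

section InnerProduct

variable {F : Type*} [NormedAddCommGroup F] [InnerProductSpace ℝ F]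

theorem exists_mem_forall_inner_pos {K : Set F} (hne : K.Nonempty) (hK : IsComplete K)
    (hconv : Convex ℝ K) (h0 : (0 : F) ∉ K) : ∃ v ∈ K, ∀ y ∈ K, 0 < ⟪v, y⟫_ℝ := by
  obtain ⟨v, hvK, hv⟩ := exists_norm_eq_iInf_of_complete_convex hne hK hconv 0
  have hobtuse := (norm_eq_iInf_iff_real_inner_le_zero hconv hvK).mp hv
  have hv0 : 0 < ⟪v, v⟫_ℝ := real_inner_self_pos.mpr (ne_of_mem_of_not_mem hvK h0)
  refine ⟨v, hvK, fun y hy ↦ ?_⟩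
  have hvy := hobtuse y hy
  rw [zero_sub, inner_neg_left, inner_sub_right] at hvy
  linarith

theorem LinearIndependent.exists_nonneg_forall_inner_sum_smul_pos {ι : Type*} [Fintype ι]
    {x : ι → F} (hx : LinearIndependent ℝ x) :
    ∃ t : ι → ℝ, (∀ j, 0 ≤ t j) ∧ ∀ i, 0 < ⟪∑ j, t j • x j, x i⟫_ℝ := by
  classical
  rcases isEmpty_or_nonempty ι with _ | ⟨⟨i₀⟩⟩
  · exact ⟨0, fun _ ↦ le_rfl, isEmptyElim⟩
  set L := Fintype.linearCombination ℝ x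
  have h0 : (0 : F) ∉ L '' stdSimplex ℝ ι := by
    rintro ⟨t, ht, hLt⟩
    rw [Fintype.linearCombination_apply] at hLt
    have hsum := ht.2
    simp [Fintype.linearIndependent_iff.mp hx t hLt] at hsum
  obtain ⟨_, ⟨t, ht, rfl⟩, hpos⟩ := exists_mem_forall_inner_pos
    (Set.Nonempty.image L ⟨_, single_mem_stdSimplex ℝ i₀⟩)
    ((isCompact_stdSimplex ℝ ι).image L.continuous_of_finiteDimensional).isComplete
    ((convex_stdSimplex ℝ ι).linear_image L) h0
  refine ⟨t, ht.1, fun i ↦ ?_⟩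
  simpa [L, Fintype.linearCombination_apply] using
    hpos _ ⟨Pi.single i 1, single_mem_stdSimplex ℝ i, by simp [L]⟩

theorem isOpen_setOf_forall_inner_pos {ι : Type*} [Finite ι] (x : ι → F) :
    IsOpen {y : F | ∀ i, 0 < ⟪y, x i⟫_ℝ} := by
  simp only [Set.ofPred_forall]
  exact isOpen_iInter_of_finite fun i ↦
    isOpen_lt continuous_const (continuous_id.inner continuous_const)

end InnerProduct

/-- Lemma 3.8 (posvector): if `x 1, ..., x r` is a linear basis of `ℝ^r`, there exist
positive integers `m i` such that `x = ∑ i, m i • x i` satisfies `⟪x, x i⟫ > 0` for all `i`. -/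
theorem stmt_0 (r : ℕ) (x : Module.Basis (Fin r) ℝ (EuclideanSpace ℝ (Fin r))) :
    ∃ m : Fin r → ℕ, (∀ i, 0 < m i) ∧
      ∀ i, 0 < (inner ℝ (∑ j, (m j : ℝ) • (x j : EuclideanSpace ℝ (Fin r))) (x i) : ℝ) := by
  obtain ⟨t, ht, hpos⟩ := x.linearIndependent.exists_nonneg_forall_inner_sum_smul_pos
  refine exists_pos_nat_sum_smul_mem_of_isOpen (isOpen_setOf_forall_inner_pos x) ?_ x ht hpos
  intro c hc y hy i
  rw [real_inner_smul_left]
  exact mul_pos hc (hy i)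
end

section
/- Let A be a real symmetric r×r matrix with non-negative off-diagonal entries. If A has a positive eigenvalue, then there exists a vector m ∈ ℤ^r with all entries non-negative such that m^T A m > 0. -/
/-!
Let `Av = μv` with `μ > 0` and `v ≠ 0`, so `vᵀAv = μ‖v‖² > 0`. Since the off-diagonal entries
are non-negative, replacing `v` by `|v|` can only increase the quadratic form, so `|v|` is a
non-negative vector with `|v|ᵀA|v| > 0`. The rescaled roundings `⌈n|v|⌉₊ / n` tend to `|v|`,
so by continuity the form is positive at one of them, hence, by homogeneity, at the
non-negative integer vector `⌈n|v|⌉₊`.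
-/

open Matrix Filter Topology

namespace Matrix

variable {ι : Type*} [Fintype ι]

theorem dotProduct_mulVec_le_abs {R : Type*} [CommRing R] [LinearOrder R] [IsStrictOrderedRing R]
    {A : Matrix ι ι R} (hoff : ∀ i j, i ≠ j → 0 ≤ A i j) (x : ι → R) :
    x ⬝ᵥ A *ᵥ x ≤ |x| ⬝ᵥ A *ᵥ |x| := by
  simp only [dotProduct, mulVec, Finset.mul_sum, Pi.abs_apply]
  refine Finset.sum_le_sum fun i _ => Finset.sum_le_sum fun j _ => ?_
  calc x i * (A i j * x j) = A i j * (x i * x j) := by ring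
    _ ≤ A i j * (|x i| * |x j|) := by
      rcases eq_or_ne i j with rfl | hij
      · rw [abs_mul_abs_self]
      · rw [← abs_mul]; exact mul_le_mul_of_nonneg_left (le_abs_self _) (hoff i j hij)
    _ = |x i| * (A i j * |x j|) := by ring

theorem dotProduct_mulVec_pos_of_mulVec_eq_smul {A : Matrix ι ι ℝ} {μ : ℝ} (hμ : 0 < μ)
    {v : ι → ℝ} (hv : v ≠ 0) (hAv : A *ᵥ v = μ • v) : 0 < v ⬝ᵥ A *ᵥ v := by
  rw [hAv, dotProduct_smul, smul_eq_mul]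
  exact mul_pos hμ (by simpa using dotProduct_star_self_pos_iff.mpr hv)

theorem exists_nat_dotProduct_mulVec_pos {A : Matrix ι ι ℝ} {w : ι → ℝ} (hw : 0 ≤ w)
    (hAw : 0 < w ⬝ᵥ A *ᵥ w) :
    ∃ m : ι → ℕ, 0 < (fun i => (m i : ℝ)) ⬝ᵥ A *ᵥ (fun i => (m i : ℝ)) := by
  have hlim : Tendsto (fun n : ℕ => fun i => (⌈w i * n⌉₊ : ℝ) / n) atTop (𝓝 w) :=
    tendsto_pi_nhds.mpr fun i =>
      (tendsto_nat_ceil_mul_div_atTop (hw i)).comp tendsto_natCast_atTop_atTop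
  have hcont : Continuous fun x : ι → ℝ => x ⬝ᵥ A *ᵥ x :=
    continuous_id.dotProduct (continuous_const.matrix_mulVec continuous_id)
  obtain ⟨n, hn, hn0⟩ :=
    ((((hcont.tendsto w).comp hlim).eventually (lt_mem_nhds hAw)).and
      (eventually_gt_atTop 0)).exists
  refine ⟨fun i => ⌈w i * n⌉₊, ?_⟩
  have hscale : (fun i => (⌈w i * n⌉₊ : ℝ)) = (n : ℝ) • fun i => (⌈w i * n⌉₊ : ℝ) / n := by
    ext i
    simp [mul_div_cancel₀ _ (Nat.cast_ne_zero.mpr hn0.ne' : (n : ℝ) ≠ 0)]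
  rw [hscale, smul_dotProduct, mulVec_smul, dotProduct_smul, smul_eq_mul, smul_eq_mul]
  exact mul_pos (Nat.cast_pos.mpr hn0) (mul_pos (Nat.cast_pos.mpr hn0) hn)

end Matrix

theorem stmt_2_general (r : ℕ) (A : Matrix (Fin r) (Fin r) ℝ)
    (hoff : ∀ i j, i ≠ j → 0 ≤ A i j)
    (heig : ∃ μ : ℝ, 0 < μ ∧ ∃ v : Fin r → ℝ, v ≠ 0 ∧ A.mulVec v = μ • v) :
    ∃ m : Fin r → ℤ, (∀ i, 0 ≤ m i) ∧
      0 < (fun i => (m i : ℝ)) ⬝ᵥ A.mulVec (fun i => (m i : ℝ)) := by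
  obtain ⟨μ, hμ, v, hv, hAv⟩ := heig
  have hAabs : 0 < |v| ⬝ᵥ A *ᵥ |v| :=
    (dotProduct_mulVec_pos_of_mulVec_eq_smul hμ hv hAv).trans_le (dotProduct_mulVec_le_abs hoff v)
  obtain ⟨m, hm⟩ := exists_nat_dotProduct_mulVec_pos (abs_nonneg v) hAabs
  exact ⟨fun i => m i, fun i => Int.natCast_nonneg _, by simpa using hm⟩

/-- A real symmetric matrix with non-negative off-diagonal entries which has a positive
eigenvalue admits a non-negative integer vector `m` with `mᵀ A m > 0`. -/
theorem stmt_2 (r : ℕ) (A : Matrix (Fin r) (Fin r) ℝ)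
    (hsym : A.IsSymm) (hoff : ∀ i j, i ≠ j → 0 ≤ A i j)
    (heig : ∃ μ : ℝ, 0 < μ ∧ ∃ v : Fin r → ℝ, v ≠ 0 ∧ A.mulVec v = μ • v) :
    ∃ m : Fin r → ℤ, (∀ i, 0 ≤ m i) ∧
      0 < (fun i => (m i : ℝ)) ⬝ᵥ A.mulVec (fun i => (m i : ℝ)) :=
  stmt_2_general r A hoff heig
end

section
/- Let C and ρ be closed convex cones in ℝ^n with ρ pointed (i.e. ρ ∩ (−ρ) = {0}) and ρ ≠ {0}. If −ρ ⊆ ρ + (−C*), where C* denotes the dual cone of C, then C* ∩ relint(ρ) ≠ ∅. -/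
/-!
Take `u` in the relative interior of `ρ`; the hypothesis applied to `-u` gives `v ∈ ρ` with
`u + v ∈ C*`. A convex cone is closed under addition, so translation by `v ∈ ρ` maps `ρ` into
itself, and it does not change the affine span of `ρ` since `v` lies in its direction. Hence it
maps the relative interior of `ρ` into itself, and `u + v` is the required point.
-/

open Pointwise

theorem AffineSubspace.pointwise_vadd_eq_self {k V P : Type*} [Ring k] [AddCommGroup V]
    [Module k V] [AddTorsor V P] {s : AffineSubspace k P} {v : V} (hv : v ∈ s.direction) :
    v +ᵥ s = s := by
  ext p
  rw [← SetLike.mem_coe, coe_pointwise_vadd, Set.mem_vadd_set_iff_neg_vadd_mem, SetLike.mem_coe,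
    vadd_mem_iff_mem_of_mem_direction (Submodule.neg_mem _ hv)]

section IntrinsicInterior

variable {𝕜 V P : Type*} [Ring 𝕜] [AddCommGroup V] [Module 𝕜 V] [TopologicalSpace P]
  [AddTorsor V P]

theorem intrinsicInterior_mono_of_affineSpan_eq {s t : Set P} (hst : s ⊆ t)
    (hspan : affineSpan 𝕜 s = affineSpan 𝕜 t) :
    intrinsicInterior 𝕜 s ⊆ intrinsicInterior 𝕜 t := by
  rw [intrinsicInterior, intrinsicInterior, hspan]
  exact Set.image_mono (interior_mono (Set.preimage_mono hst))

theorem vadd_mem_intrinsicInterior [ContinuousConstVAdd V P] {s : Set P} {v : V} {x : P}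
    (hv : v ∈ vectorSpan 𝕜 s) (hvs : v +ᵥ s ⊆ s) (hx : x ∈ intrinsicInterior 𝕜 s) :
    v +ᵥ x ∈ intrinsicInterior 𝕜 s := by
  have hspan : affineSpan 𝕜 (v +ᵥ s) = affineSpan 𝕜 s := by
    rw [← AffineSubspace.pointwise_vadd_span, AffineSubspace.pointwise_vadd_eq_self]
    rwa [direction_affineSpan]
  have himage : intrinsicInterior 𝕜 (v +ᵥ s) = v +ᵥ intrinsicInterior 𝕜 s := by
    have hcoe : ⇑(ContinuousAffineEquiv.constVAdd 𝕜 P v) = (v +ᵥ ·) := rfl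
    simpa only [hcoe, Set.image_vadd] using
      (ContinuousAffineEquiv.constVAdd 𝕜 P v).intrinsicInterior_image s
  refine intrinsicInterior_mono_of_affineSpan_eq hvs hspan ?_
  rw [himage]
  exact Set.vadd_mem_vadd_set hx

end IntrinsicInterior

theorem add_mem_intrinsicInterior_of_add_mem {𝕜 V : Type*} [Ring 𝕜] [AddCommGroup V]
    [Module 𝕜 V] [TopologicalSpace V] [ContinuousAdd V] {s : Set V}
    (hadd : ∀ a ∈ s, ∀ b ∈ s, a + b ∈ s) {x v : V} (hx : x ∈ intrinsicInterior 𝕜 s)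
    (hv : v ∈ s) : x + v ∈ intrinsicInterior 𝕜 s := by
  have hv_span : v ∈ vectorSpan 𝕜 s := by
    simpa using vsub_mem_vectorSpan 𝕜 (hadd v hv v hv) hv
  have hvs : v +ᵥ s ⊆ s := by
    rintro _ ⟨a, ha, rfl⟩
    exact hadd v hv a ha
  rw [add_comm]
  exact vadd_mem_intrinsicInterior hv_span hvs hx

theorem Convex.add_mem_of_smul_mem {𝕜 E : Type*} [Field 𝕜] [LinearOrder 𝕜]
    [IsStrictOrderedRing 𝕜] [AddCommGroup E] [Module 𝕜 E] {s : Set E} (hs : Convex 𝕜 s)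
    (hsmul : ∀ x ∈ s, ∀ c : 𝕜, 0 ≤ c → c • x ∈ s) {a b : E} (ha : a ∈ s) (hb : b ∈ s) :
    a + b ∈ s := by
  have hmid : (2⁻¹ : 𝕜) • a + (2⁻¹ : 𝕜) • b ∈ s :=
    hs ha hb (by positivity) (by positivity) (by norm_num)
  convert hsmul _ hmid 2 zero_le_two using 1
  rw [smul_add, smul_inv_smul₀ two_ne_zero, smul_inv_smul₀ two_ne_zero]

theorem stmt_3_general (n : ℕ) (ρ : Set (EuclideanSpace ℝ (Fin n)))
    (hρc : Convex ℝ ρ) (hρcone : ∀ x ∈ ρ, ∀ c : ℝ, 0 ≤ c → c • x ∈ ρ)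
    (hpointed : ρ ∩ (-ρ) = {0})
    (Cstar : Set (EuclideanSpace ℝ (Fin n)))
    (hsub : -ρ ⊆ ρ + (-Cstar)) :
    (Cstar ∩ intrinsicInterior ℝ ρ).Nonempty := by
  have hzero : (0 : EuclideanSpace ℝ (Fin n)) ∈ ρ ∩ -ρ := hpointed ▸ rfl
  obtain ⟨u, hu⟩ := Set.Nonempty.intrinsicInterior hρc ⟨0, hzero.1⟩
  obtain ⟨v, hv, z, hz, hvz : v + z = -u⟩ := hsub (Set.neg_mem_neg.2 (intrinsicInterior_subset hu))
  have huv : u + v = -z := by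
    refine eq_neg_of_add_eq_zero_left ?_
    rw [add_assoc, hvz, add_neg_cancel]
  have hρadd : ∀ a ∈ ρ, ∀ b ∈ ρ, a + b ∈ ρ := fun _ ha _ hb ↦
    hρc.add_mem_of_smul_mem hρcone ha hb
  exact ⟨u + v, huv ▸ hz, add_mem_intrinsicInterior_of_add_mem hρadd hu hv⟩

/-- Convex-geometric step of Lemma 2.13: if `C`, `ρ` are closed convex cones, `ρ` pointed
and non-zero, and `-ρ ⊆ ρ + (-C*)`, then `C*` meets the relative interior of `ρ`. -/
theorem stmt_3 (n : ℕ) (C ρ : Set (EuclideanSpace ℝ (Fin n)))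
    (hCc : Convex ℝ C) (hCcl : IsClosed C) (hCcone : ∀ x ∈ C, ∀ c : ℝ, 0 ≤ c → c • x ∈ C)
    (hρc : Convex ℝ ρ) (hρcl : IsClosed ρ) (hρcone : ∀ x ∈ ρ, ∀ c : ℝ, 0 ≤ c → c • x ∈ ρ)
    (hpointed : ρ ∩ (-ρ) = {0}) (hne : ρ ≠ {0})
    (Cstar : Set (EuclideanSpace ℝ (Fin n)))
    (hCstar : Cstar = {v | ∀ γ ∈ C, (0 : ℝ) ≤ inner ℝ γ v})
    (hsub : -ρ ⊆ ρ + (-Cstar)) :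
    (Cstar ∩ intrinsicInterior ℝ ρ).Nonempty :=
  stmt_3_general n ρ hρc hρcone hpointed Cstar hsub
end

section
/- Let A ⊆ ℕ^n be the lattice points of a rational polyhedral cone and let B ⊆ ℤ^n be a set of the form {β ∈ ℤ^n : ⟨β, u_ρ⟩ ≥ −m_ρ for ρ in a finite index set}, where each u_ρ ∈ ℤ^n and m_ρ ∈ ℤ, and A = {α ∈ ℤ^n : ⟨α, u_ρ⟩ ≥ 0 for all ρ}. Then there exists a finite subset B_0 ⊆ B with B = B_0 + A. -/
open Pointwise

/-
Record each `β ∈ B` by its vector of slacks `(⟨β, u ρ⟩ + m ρ)_ρ ∈ ℕ^ι`. By Dickson's lemma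
finitely many `β₀ ∈ B` have slack vectors below that of every `β ∈ B`, and a slack inequality
`slack β₀ ≤ slack β` says exactly that `β - β₀ ∈ A`.
-/

theorem Set.exists_finite_subset_forall_exists_le {α : Type*} [PartialOrder α]
    [WellQuasiOrderedLE α] (s : Set α) : ∃ t ⊆ s, t.Finite ∧ ∀ a ∈ s, ∃ b ∈ t, b ≤ a := by
  have hpwo := Set.isPWO_of_wellQuasiOrderedLE s
  refine ⟨{x | Minimal (· ∈ s) x}, fun _ hx => hx.1,
    (setOfPred_minimal_antichain _).finite_of_partiallyWellOrderedOn
      (hpwo.mono fun _ hx => hx.1), fun a ha => ?_⟩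
  obtain ⟨b, hba, hb⟩ := hpwo.exists_le_minimal ha
  exact ⟨b, hb, hba⟩

theorem Set.exists_finite_subset_forall_exists_map_le {α β : Type*} [PartialOrder β]
    [WellQuasiOrderedLE β] (f : α → β) (s : Set α) :
    ∃ t ⊆ s, t.Finite ∧ ∀ a ∈ s, ∃ b ∈ t, f b ≤ f a := by
  obtain ⟨t, hts, htfin, hdom⟩ := (f '' s).exists_finite_subset_forall_exists_le
  obtain ⟨t', ht's, ht'fin, rfl⟩ :=
    Set.exists_subset_image_finite_and.1 ⟨t, hts, htfin, rfl⟩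
  refine ⟨t', ht's, ht'fin, fun a ha => ?_⟩
  obtain ⟨_, ⟨b, hb, rfl⟩, hle⟩ := hdom (f a) ⟨a, ha, rfl⟩
  exact ⟨b, hb, hle⟩

theorem exists_finset_setOf_le_eq_add {M ι : Type*} [AddCommGroup M] [Finite ι]
    (φ : ι → M →+ ℤ) (m : ι → ℤ) :
    ∃ B₀ : Finset M, ↑B₀ ⊆ {β | ∀ ρ, -m ρ ≤ φ ρ β} ∧
      {β | ∀ ρ, -m ρ ≤ φ ρ β} = ↑B₀ + {α | ∀ ρ, 0 ≤ φ ρ α} := by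
  set B := {β | ∀ ρ, -m ρ ≤ φ ρ β}
  obtain ⟨t, htB, htfin, hdom⟩ :=
    B.exists_finite_subset_forall_exists_map_le fun β ρ => (φ ρ β + m ρ).toNat
  refine ⟨htfin.toFinset, by simpa using htB, subset_antisymm ?_ ?_⟩
  · intro β hβ
    obtain ⟨β₀, hβ₀, hslack⟩ := hdom β hβ
    refine ⟨β₀, by simpa using hβ₀, β - β₀, fun ρ => ?_, add_sub_cancel β₀ β⟩
    have := hslack ρ
    have := htB hβ₀ ρ
    have := hβ ρ
    simp only [map_sub] at *
    omega
  · rintro _ ⟨β₀, hβ₀, α, hα, rfl⟩ ρ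
    have := htB (by simpa using hβ₀) ρ
    have := hα ρ
    rw [map_add]
    omega

/-- Dickson's lemma step in Proposition 4.5: `B = {β : ⟨β, u ρ⟩ ≥ -m ρ}` is a finitely
generated module over the monoid `A = {α : ⟨α, u ρ⟩ ≥ 0}`, i.e. `B = B₀ + A` for a finite
subset `B₀ ⊆ B`. -/
theorem stmt_5 (n : ℕ) (ι : Type) [Fintype ι] (u : ι → Fin n → ℤ) (m : ι → ℤ)
    (A B : Set (Fin n → ℤ))
    (hA : A = {α | ∀ ρ, 0 ≤ ∑ j, α j * u ρ j})
    (hB : B = {β | ∀ ρ, -(m ρ) ≤ ∑ j, β j * u ρ j}) :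
    ∃ B₀ : Finset (Fin n → ℤ), ↑B₀ ⊆ B ∧ B = ↑B₀ + A := by
  subst hA hB
  exact exists_finset_setOf_le_eq_add
    (fun ρ => (dotProductBilin ℤ ℤ).flip (u ρ) |>.toAddMonoidHom) m
end

section
/- For the tridiagonal symmetric integer matrix A with diagonal entries −b_1, ..., −b_n and off-diagonal entries 1 (i.e. A_{ii} = −b_i, A_{i,i+1} = A_{i+1,i} = 1, all other entries 0), and vectors v_0, v_1, ..., v_{n+1} in ℝ^2 satisfying v_{i+1} + v_{i−1} = b_i v_i for i = 1, ..., n, one has v_{n+1} = (−1)^n det(A) · v_1 + (−1)^n δ(b_2, ..., b_n) · v_0, where δ(b_2, ..., b_n) is the determinant of the corresponding (n−1)×(n−1) tridiagonal matrix with diagonal −b_2, ..., −b_n (and δ of the empty sequence is 1). -/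
/-!
Expanding along the first row gives the continuant recursion
`det A(b₀, b₁, …) = -b₀ det A(b₁, …) - det A(b₂, …)`. The sequence `v` satisfies the same
three-term recursion, so induction on `n`, applied to the shifted sequences `v (· + 1)` and
`b (· + 1)` and followed by `v 2 = b 1 • v 1 - v 0`, matches the coefficients.
-/

/-- The `n × n` tridiagonal matrix with diagonal `-b 0, ..., -b (n-1)` and off-diagonal
entries `1`. -/
def triMat (b : ℕ → ℝ) (n : ℕ) : Matrix (Fin n) (Fin n) ℝ :=
  Matrix.of fun i j =>
    if (i : ℕ) = (j : ℕ) then -(b (i : ℕ))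
    else if (i : ℕ) + 1 = (j : ℕ) ∨ (j : ℕ) + 1 = (i : ℕ) then 1 else 0

theorem det_triMat_zero (b : ℕ → ℝ) : (triMat b 0).det = 1 :=
  Matrix.det_isEmpty

theorem det_triMat_one (b : ℕ → ℝ) : (triMat b 1).det = -b 0 := by
  simp [Matrix.det_unique, triMat]

theorem triMat_submatrix_succ (b : ℕ → ℝ) (n : ℕ) :
    (triMat b (n + 1)).submatrix Fin.succ Fin.succ = triMat (fun i => b (i + 1)) n := by
  ext i j
  simp only [Matrix.submatrix_apply, triMat, Matrix.of_apply, Fin.val_succ]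
  split_ifs <;> first | rfl | omega

theorem det_triMat_add_two (b : ℕ → ℝ) (n : ℕ) :
    (triMat b (n + 2)).det =
      -b 0 * (triMat (fun i => b (i + 1)) (n + 1)).det - (triMat (fun i => b (i + 2)) n).det := by
  have hminor : ((triMat b (n + 2)).submatrix Fin.succ (Fin.succ 0).succAbove).det =
      (triMat (fun i => b (i + 2)) n).det := by
    -- this minor has first column `(1, 0, …, 0)`
    have hcorner : ((triMat b (n + 2)).submatrix Fin.succ (Fin.succ 0).succAbove).submatrix
        (Fin.succAbove 0) Fin.succ = triMat (fun i => b (i + 2)) n := by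
      have : ((Fin.succ 0).succAbove ∘ Fin.succ : Fin n → Fin (n + 2)) = Fin.succ ∘ Fin.succ :=
        funext fun j => Fin.succ_succAbove_succ 0 j
      rw [Matrix.submatrix_submatrix, Fin.succAbove_zero, this, ← Matrix.submatrix_submatrix,
        triMat_submatrix_succ, triMat_submatrix_succ]
    rw [Matrix.det_succ_column_zero, Fin.sum_univ_succ, hcorner,
      Finset.sum_eq_zero fun i _ => by simp [triMat, Fin.succAbove]]
    simp [triMat]
  rw [Matrix.det_succ_row_zero, Fin.sum_univ_succ, Fin.sum_univ_succ,
    Finset.sum_eq_zero fun j _ => by simp [triMat], hminor, Fin.succAbove_zero,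
    triMat_submatrix_succ]
  simp [triMat]
  ring

/-- The determinant identity of Lemma 3.10: if `v (i+1) + v (i-1) = b i • v i` for
`i = 1, ..., n`, then `v (n+1) = (-1)^n det(A) • v 1 + (-1)^n δ(b 2, ..., b n) • v 0`,
where `A` is the tridiagonal intersection matrix of `-b 1, ..., -b n`. -/
theorem stmt_10 (n : ℕ) (hn : 1 ≤ n) (b : ℕ → ℝ) (v : ℕ → ℝ × ℝ)
    (hrec : ∀ i, 1 ≤ i → i ≤ n → v (i + 1) + v (i - 1) = b i • v i) :
    v (n + 1) =
      ((-1 : ℝ) ^ n * (triMat (fun i => b (i + 1)) n).det) • v 1 +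
      ((-1 : ℝ) ^ n * (triMat (fun i => b (i + 2)) (n - 1)).det) • v 0 := by
  induction n, hn using Nat.le_induction generalizing b v with
  | base =>
    rw [eq_sub_of_add_eq (hrec 1 le_rfl le_rfl), det_triMat_one, Nat.sub_self, det_triMat_zero]
    module
  | succ m hm ih =>
    have hshift := ih (fun i => b (i + 1)) (fun i => v (i + 1))
      (fun i hi him => by
        obtain ⟨k, rfl⟩ : ∃ k, i = k + 1 := ⟨i - 1, by omega⟩
        exact hrec (k + 2) (by omega) (by omega))
    obtain ⟨p, rfl⟩ : ∃ p, m = p + 1 := ⟨m - 1, by omega⟩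
    have hdet : (triMat (fun i => b (i + 1)) (p + 2)).det =
        -b 1 * (triMat (fun i => b (i + 2)) (p + 1)).det - (triMat (fun i => b (i + 3)) p).det :=
      det_triMat_add_two _ p
    simp only [add_assoc, Nat.reduceAdd] at hshift ⊢
    rw [Nat.add_sub_cancel] at hshift ⊢
    rw [hshift, eq_sub_of_add_eq (hrec 1 le_rfl (by omega)), hdet]
    module
end

section
/- With the notation of the tridiagonal matrix identity: let v_0, v_1 be linearly independent vectors in ℝ^2, b_1, ..., b_n integers, and define v_{i+1} = b_i v_i − v_{i−1}. Let A be the n×n tridiagonal matrix with diagonal −b_i and off-diagonal 1's. If v_{n+1} = −v_0, then det(A) = 0. -/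
open Matrix

theorem LinearIndependent.exists_dual_pair_eq_zero_ne_zero {K V : Type*} [Field K]
    [AddCommGroup V] [Module K V] {x y : V} (h : LinearIndependent K ![x, y]) :
    ∃ φ : Module.Dual K V, φ x = 0 ∧ φ y ≠ 0 := by
  have hy : y ∉ K ∙ x := by
    simpa [Submodule.mem_span_singleton] using
      (linearIndependent_fin2.mp (LinearIndependent.pair_symm_iff.mp h)).2
  obtain ⟨φ, hφy, hφ⟩ := Submodule.exists_dual_map_eq_bot_of_notMem hy inferInstance
  refine ⟨φ, ?_, hφy⟩
  simpa [hφ] using Submodule.mem_map_of_mem (f := φ) (Submodule.mem_span_singleton_self x)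

theorem triMat_mulVec_apply {b c : ℕ → ℝ} {n : ℕ} (h0 : c 0 = 0) (hn : c (n + 1) = 0)
    (i : Fin n) :
    (triMat b n *ᵥ fun j => c (j + 1)) i = c i - b i * c (i + 1) + c (i + 2) := by
  obtain ⟨m, hm⟩ := i
  simp only [Matrix.mulVec, dotProduct, triMat, Matrix.of_apply]
  rw [Fin.sum_univ_eq_sum_range (fun j => (if m = j then -b m
    else if m + 1 = j ∨ j + 1 = m then 1 else 0) * c (j + 1)) n]
  have hsplit : ∀ j, (if m = j then -b m else if m + 1 = j ∨ j + 1 = m then 1 else 0) * c (j + 1)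
      = (if j = m then -b m * c (m + 1) else 0) + (if j = m + 1 then c (m + 2) else 0)
        + (if j + 1 = m then c m else 0) := by
    intro j
    split_ifs <;> subst_vars <;> first | omega | ring
  simp only [hsplit, Finset.sum_add_distrib, Finset.sum_ite_eq', Finset.mem_range]
  have hprev : (∑ j ∈ Finset.range n, if j + 1 = m then c m else 0) = c m := by
    rcases m with _ | k
    · simp [h0]
    · simp [show k < n by omega]
  have hnext : (if m + 1 < n then c (m + 2) else 0) = c (m + 2) := by
    split_ifs with h
    · rfl
    · rw [show m + 2 = n + 1 by omega, hn]
  rw [if_pos hm, hnext, hprev]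
  ring

theorem triMat_det_eq_zero_of_recurrence {b c : ℕ → ℝ} {n : ℕ} (h0 : c 0 = 0) (h1 : c 1 ≠ 0)
    (hn : c (n + 1) = 0) (hrec : ∀ i < n, c (i + 2) = b i * c (i + 1) - c i) :
    (triMat b n).det = 0 := by
  have hpos : 0 < n := Nat.pos_of_ne_zero (by rintro rfl; exact h1 hn)
  rw [← exists_mulVec_eq_zero_iff]
  refine ⟨fun j => c (j + 1), fun h => h1 (by simpa using congrFun h ⟨0, hpos⟩), ?_⟩
  funext i
  rw [triMat_mulVec_apply h0 hn, hrec i i.isLt, Pi.zero_apply]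
  ring

theorem stmt_11_general (n : ℕ) (b : ℕ → ℤ) (v : ℕ → ℝ × ℝ)
    (hindep : LinearIndependent ℝ ![v 0, v 1])
    (hrec : ∀ i, 1 ≤ i → i ≤ n → v (i + 1) = (b i : ℝ) • v i - v (i - 1))
    (hcycle : v (n + 1) = -v 0) :
    (triMat (fun i => (b (i + 1) : ℝ)) n).det = 0 := by
  obtain ⟨φ, hφ0, hφ1⟩ := hindep.exists_dual_pair_eq_zero_ne_zero
  refine triMat_det_eq_zero_of_recurrence (c := fun k => φ (v k)) hφ0 hφ1 ?_ fun i hi => ?_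
  · simp [hcycle, hφ0]
  · simp [hrec (i + 1) (by omega) (by omega)]

/-- Part (a) of Lemma 3.10: if `v 0, v 1` are linearly independent, `v (i+1) = b i • v i - v (i-1)`
and `v (n+1) = -v 0`, then the tridiagonal matrix with diagonal `-b 1, ..., -b n` is singular. -/
theorem stmt_11 (n : ℕ) (hn : 1 ≤ n) (b : ℕ → ℤ) (v : ℕ → ℝ × ℝ)
    (hindep : LinearIndependent ℝ ![v 0, v 1])
    (hrec : ∀ i, 1 ≤ i → i ≤ n → v (i + 1) = (b i : ℝ) • v i - v (i - 1))
    (hcycle : v (n + 1) = -v 0) :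
    (triMat (fun i => (b (i + 1) : ℝ)) n).det = 0 :=
  stmt_11_general n b v hindep hrec hcycle
end

section
/- Let U be a non-empty bounded subset of (ℝ₊*)^n whose closure is contained in (ℝ₊*)^n, let v ∈ ℤ^n be non-zero, and define the tentacle S = {λ_v(s)ξ : ξ ∈ U, 0 < s ≤ 1} where λ_v(s)ξ = (s^{v_1}ξ_1, ..., s^{v_n}ξ_n). Then for u ∈ ℤ^n, the set S(u) = {ξ ∈ (ℝ*)^n : λ_u(s)ξ ∈ S for all sufficiently small s > 0} is non-empty if and only if u ∈ ℤ₊·v (i.e. u is a non-negative integer multiple of v). -/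
/-!
If `u` is not a non-negative rational multiple of `v`, some `α ∈ ℤⁿ` has `⟨α, u⟩ > 0 ≥ ⟨α, v⟩`.
The function `Σ αᵢ log xᵢ` is bounded below on `U` (its closure is a compact subset of the open
orthant), hence also on the tentacle, because `λ_v(t)` with `t ≤ 1` only increases it.
Along `λ_u(s) ξ` it equals `⟨α, u⟩ log s + const`, which tends to `-∞` as `s → 0⁺`.
If instead `p u = q v` with `p > 0`, `q ≥ 0`, primitivity of `v` forces `p ∣ q`.
-/

open Filter Topology

section
variable {R : Type*} [CommRing R] [LinearOrder R] [IsStrictOrderedRing R]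
  {ι : Type*} [Fintype ι]

theorem exists_dotProduct_pos_nonpos_or_smul_eq_smul {u v : ι → R} (hv : v ≠ 0) :
    (∃ α, 0 < α ⬝ᵥ u ∧ α ⬝ᵥ v ≤ 0) ∨ ∃ p q : R, 0 < p ∧ 0 ≤ q ∧ p • u = q • v := by
  have hp : 0 < v ⬝ᵥ v :=
    (Fintype.sum_nonneg fun i => mul_self_nonneg (v i)).lt_of_ne'
      (dotProduct_self_eq_zero.not.2 hv)
  by_cases hq : u ⬝ᵥ v < 0
  · refine .inl ⟨-v, ?_, ?_⟩
    · rw [neg_dotProduct, dotProduct_comm]; linarith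
    · rw [neg_dotProduct]; linarith
  -- `v ⬝ᵥ v` times the component of `u` orthogonal to `v`
  set α := (v ⬝ᵥ v) • u - (u ⬝ᵥ v) • v
  by_cases hα : α = 0
  · exact .inr ⟨_, _, hp, not_lt.1 hq, sub_eq_zero.1 hα⟩
  have hαv : α ⬝ᵥ v = 0 := by
    simp only [α, sub_dotProduct, smul_dotProduct, smul_eq_mul]; ring
  have hαα : α ⬝ᵥ α = (v ⬝ᵥ v) * (α ⬝ᵥ u) := by
    conv_lhs => rw [dotProduct_comm]
    simp only [α, dotProduct_sub, dotProduct_smul, smul_eq_mul, hαv, mul_zero, sub_zero]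
  have hαα_pos : 0 < α ⬝ᵥ α :=
    (Fintype.sum_nonneg fun i => mul_self_nonneg (α i)).lt_of_ne'
      (dotProduct_self_eq_zero.not.2 hα)
  exact .inl ⟨α, pos_of_mul_pos_right (hαα ▸ hαα_pos) hp.le, hαv.le⟩

end

theorem exists_nat_eq_smul_of_smul_eq_smul {ι : Type*} [Fintype ι] {u v : ι → ℤ}
    (hprim : Finset.univ.gcd (fun i => (v i).natAbs) = 1) {p q : ℤ} (hp : 0 < p) (hq : 0 ≤ q)
    (h : p • u = q • v) : ∃ k : ℕ, u = (k : ℤ) • v := by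
  have hpq : p ∣ q := by
    have : p.natAbs ∣ Finset.univ.gcd (fun i => q.natAbs * (v i).natAbs) :=
      Finset.dvd_gcd fun i _ => by
        rw [← Int.natAbs_mul, ← smul_eq_mul, ← Pi.smul_apply, ← h]
        exact Int.natAbs_dvd_natAbs.2 (dvd_mul_right _ _)
    rwa [Finset.gcd_mul_left, hprim, normalize_eq, mul_one, Int.natAbs_dvd_natAbs] at this
  obtain ⟨k, rfl⟩ := hpq
  lift k to ℕ using nonneg_of_mul_nonneg_right hq hp
  refine ⟨k, smul_right_injective _ hp.ne' ?_⟩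
  simpa only [mul_smul] using h

section
variable {ι : Type*}

/-- The paper's `λ_v(s) ξ`. -/
noncomputable def cochar (v : ι → ℤ) (s : ℝ) (ξ : ι → ℝ) : ι → ℝ := fun i => s ^ v i * ξ i

def tentacle (U : Set (ι → ℝ)) (v : ι → ℤ) : Set (ι → ℝ) :=
  {x | ∃ ξ ∈ U, ∃ s : ℝ, 0 < s ∧ s ≤ 1 ∧ x = cochar v s ξ}

theorem cochar_smul (k : ℕ) (v : ι → ℤ) (s : ℝ) (ξ : ι → ℝ) :
    cochar ((k : ℤ) • v) s ξ = cochar v (s ^ k) ξ := by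
  ext i
  simp only [cochar, Pi.smul_apply, smul_eq_mul, zpow_mul, zpow_natCast]

theorem cochar_smul_mem_tentacle {U : Set (ι → ℝ)} {ξ : ι → ℝ} (hξ : ξ ∈ U) (k : ℕ)
    (v : ι → ℤ) {s : ℝ} (hs₀ : 0 < s) (hs₁ : s ≤ 1) :
    cochar ((k : ℤ) • v) s ξ ∈ tentacle U v :=
  ⟨ξ, hξ, s ^ k, pow_pos hs₀ k, pow_le_one₀ hs₀.le hs₁, cochar_smul k v s ξ⟩

variable [Fintype ι]

/-- `log |x ^ α|`; in these coordinates `cochar u s` acts by translation. -/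
noncomputable def logMonomial (α : ι → ℤ) (x : ι → ℝ) : ℝ := ∑ i, (α i : ℝ) * Real.log (x i)

theorem logMonomial_cochar (α u : ι → ℤ) {s : ℝ} (hs : 0 < s) {ξ : ι → ℝ}
    (hξ : ∀ i, ξ i ≠ 0) :
    logMonomial α (cochar u s ξ) = (α ⬝ᵥ u : ℤ) * Real.log s + logMonomial α ξ := by
  simp only [logMonomial, cochar, dotProduct, Real.log_mul (zpow_ne_zero _ hs.ne') (hξ _),
    Real.log_zpow, Int.cast_sum, Int.cast_mul, Finset.sum_mul, ← Finset.sum_add_distrib]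
  exact Finset.sum_congr rfl fun i _ => by ring

theorem continuousOn_logMonomial (α : ι → ℤ) :
    ContinuousOn (logMonomial α) {x | ∀ i, 0 < x i} :=
  continuousOn_finsetSum _ fun i _ => continuousOn_const.mul <|
    (continuous_apply i).continuousOn.log fun _ hx => (hx i).ne'

theorem bddBelow_logMonomial_tentacle {U : Set (ι → ℝ)} (hU : Bornology.IsBounded U)
    (hUpos : closure U ⊆ {x | ∀ i, 0 < x i}) {α v : ι → ℤ} (hαv : α ⬝ᵥ v ≤ 0) :
    BddBelow (logMonomial α '' tentacle U v) := by
  obtain ⟨m, hm⟩ := (hU.isCompact_closure.bddBelow_image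
    ((continuousOn_logMonomial α).mono hUpos)).mono (Set.image_mono subset_closure)
  refine ⟨m, Set.forall_mem_image.2 ?_⟩
  rintro _ ⟨η, hη, t, ht₀, ht₁, rfl⟩
  have hηpos : ∀ i, 0 < η i := hUpos (subset_closure hη)
  rw [logMonomial_cochar α v ht₀ fun i => (hηpos i).ne']
  have : 0 ≤ ((α ⬝ᵥ v : ℤ) : ℝ) * Real.log t :=
    mul_nonneg_of_nonpos_of_nonpos (by exact_mod_cast hαv) (Real.log_nonpos ht₀.le ht₁)
  linarith [hm ⟨η, hη, rfl⟩]

theorem not_eventually_cochar_mem {T : Set (ι → ℝ)} {α u : ι → ℤ}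
    (hT : BddBelow (logMonomial α '' T)) (hαu : 0 < α ⬝ᵥ u) {ξ : ι → ℝ} (hξ : ∀ i, ξ i ≠ 0) :
    ¬ ∀ᶠ s in 𝓝[>] 0, cochar u s ξ ∈ T := by
  intro hev
  obtain ⟨m, hm⟩ := hT
  have hlim : Tendsto (fun s => logMonomial α (cochar u s ξ)) (𝓝[>] 0) atBot := by
    refine Tendsto.congr' (eventually_mem_nhdsWithin.mono fun s hs =>
      (logMonomial_cochar α u hs hξ).symm) ?_
    exact tendsto_atBot_add_const_right _ _
      (Real.tendsto_log_nhdsGT_zero.const_mul_atBot (by exact_mod_cast hαu))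
  obtain ⟨s, hsT, hsm⟩ := (hev.and (hlim.eventually_lt_atBot m)).exists
  exact hsm.not_ge (hm ⟨_, hsT, rfl⟩)

end

/-- Lemma 2.17(a): for the `v`-tentacle `S = {λ_v(s)·ξ : ξ ∈ U, 0 < s ≤ 1}` over a
non-empty bounded `U` with closure contained in the open positive orthant, and `v` a
non-zero primitive lattice vector, `S(u)` is non-empty if and only if `u` is a
non-negative integer multiple of `v`. -/
theorem stmt_14 (n : ℕ) (U : Set (Fin n → ℝ)) (hUne : U.Nonempty)
    (hUbd : Bornology.IsBounded U)
    (hUpos : closure U ⊆ {ξ | ∀ i, 0 < ξ i})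
    (v : Fin n → ℤ) (hv : v ≠ 0)
    (hprim : Finset.univ.gcd (fun i => (v i).natAbs) = 1)
    (S : Set (Fin n → ℝ))
    (hS : S = {x | ∃ ξ ∈ U, ∃ s : ℝ, 0 < s ∧ s ≤ 1 ∧ x = fun i => s ^ v i * ξ i})
    (u : Fin n → ℤ) :
    ({ξ : Fin n → ℝ | (∀ i, ξ i ≠ 0) ∧
        ∃ ε > (0 : ℝ), ∀ s : ℝ, 0 < s → s < ε → (fun i => s ^ u i * ξ i) ∈ S}).Nonempty
      ↔ ∃ k : ℕ, u = fun i => (k : ℤ) * v i := by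
  change S = tentacle U v at hS
  subst hS
  constructor
  · rintro ⟨ξ, hξ, ε, hε, hmem⟩
    have hev : ∀ᶠ s in 𝓝[>] 0, cochar u s ξ ∈ tentacle U v :=
      (nhdsGT_basis 0).eventually_iff.2 ⟨ε, hε, fun s hs => hmem s hs.1 hs.2⟩
    rcases exists_dotProduct_pos_nonpos_or_smul_eq_smul (u := u) hv with
      ⟨α, hαu, hαv⟩ | ⟨p, q, hp, hq, hpq⟩
    · exact absurd hev
        (not_eventually_cochar_mem (bddBelow_logMonomial_tentacle hUbd hUpos hαv) hαu hξ)
    · obtain ⟨k, rfl⟩ := exists_nat_eq_smul_of_smul_eq_smul hprim hp hq hpq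
      exact ⟨k, rfl⟩
  · rintro ⟨k, rfl⟩
    obtain ⟨ξ, hξU⟩ := hUne
    exact ⟨ξ, fun i => (hUpos (subset_closure hξU) i).ne', 1, one_pos,
      fun s hs₀ hs₁ => cochar_smul_mem_tentacle hξU k v hs₀ hs₁.le⟩
end

section
/- Let v ∈ ℤ^n, S a tentacle S = {λ_v(s)ξ : ξ ∈ U, 0 < s ≤ 1} with U ⊆ (ℝ₊*)^n open, non-empty and with compact closure in (ℝ₊*)^n. Then a monomial x^α (α ∈ ℤ^n) is bounded on S if and only if ⟨α, v⟩ ≥ 0. -/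
/-!
Along the curve `s ↦ λ_v(s) ξ` the monomial scales as `x^α (λ_v(s) ξ) = s^⟨α,v⟩ ξ^α`. On the
closure of `U`, a compact subset of the open positive orthant, `ξ^α` is continuous, hence
bounded, and positive. So for `⟨α,v⟩ ≥ 0` the factor `s^⟨α,v⟩ ≤ 1` keeps `x^α` bounded on the
tentacle, while for `⟨α,v⟩ < 0` it blows up as `s → 0⁺` along any single `ξ ∈ U`.
-/

open Filter Topology

lemma Finset.prod_zpow_eq_zpow_sum₀ {ι G₀ : Type*} [CommGroupWithZero G₀] {a : G₀} (ha : a ≠ 0)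
    (s : Finset ι) (f : ι → ℤ) : ∏ i ∈ s, a ^ f i = a ^ ∑ i ∈ s, f i := by
  induction s using Finset.cons_induction with
  | empty => simp
  | cons j s hj ih => simp [Finset.sum_cons, Finset.prod_cons, zpow_add₀ ha, ih]

lemma prod_zpow_weighted_scaling {ι : Type*} [Fintype ι] {s : ℝ} (hs : s ≠ 0) (ξ : ι → ℝ)
    (v α : ι → ℤ) :
    ∏ i, (s ^ v i * ξ i) ^ α i = s ^ (∑ i, α i * v i) * ∏ i, ξ i ^ α i := by
  rw [← Finset.prod_zpow_eq_zpow_sum₀ hs, ← Finset.prod_mul_distrib]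
  refine Finset.prod_congr rfl fun i _ => ?_
  rw [mul_zpow, ← zpow_mul, mul_comm (α i)]

lemma IsCompact.exists_bound_abs_prod_zpow {ι : Type*} [Fintype ι] {K : Set (ι → ℝ)}
    (hK : IsCompact K) (hpos : K ⊆ {ξ | ∀ i, 0 < ξ i}) (α : ι → ℤ) :
    ∃ B : ℝ, ∀ ξ ∈ K, |∏ i, ξ i ^ α i| ≤ B := by
  have hcont : ContinuousOn (fun ξ : ι → ℝ => ∏ i, ξ i ^ α i) K :=
    continuousOn_finsetProd _ fun i _ =>
      (continuous_apply i).continuousOn.zpow₀ _ fun ξ hξ => Or.inl (hpos hξ i).ne'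
  simpa only [Real.norm_eq_abs] using hK.exists_bound_of_continuousOn hcont

lemma tendsto_zpow_nhdsGT_zero_atTop {m : ℤ} (hm : m < 0) :
    Tendsto (fun s : ℝ => s ^ m) (𝓝[>] 0) atTop := by
  have hpow : Tendsto (fun t : ℝ => t ^ (-m)) atTop atTop := tendsto_zpow_atTop_atTop (by omega)
  refine (hpow.comp tendsto_inv_nhdsGT_zero).congr fun s => ?_
  simp [inv_zpow']

lemma exists_lt_zpow_mul_of_neg {m : ℤ} (hm : m < 0) {C : ℝ} (hC : 0 < C) (B : ℝ) :
    ∃ s : ℝ, 0 < s ∧ s ≤ 1 ∧ B < s ^ m * C := by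
  have hlarge : ∀ᶠ s in 𝓝[>] (0 : ℝ), B < s ^ m * C :=
    ((tendsto_zpow_nhdsGT_zero_atTop hm).atTop_mul_const hC).eventually_gt_atTop B
  have hsmall : ∀ᶠ s in 𝓝[>] (0 : ℝ), s ≤ 1 :=
    Filter.mem_of_superset (Ioo_mem_nhdsGT zero_lt_one) fun s hs => hs.2.le
  have hpos : ∀ᶠ s in 𝓝[>] (0 : ℝ), 0 < s := self_mem_nhdsWithin
  obtain ⟨s, hs, hs1, hB⟩ := (hpos.and (hsmall.and hlarge)).exists
  exact ⟨s, hs, hs1, hB⟩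

theorem stmt_15_general (n : ℕ) (U : Set (Fin n → ℝ)) (hUne : U.Nonempty)
    (hUcpt : IsCompact (closure U))
    (hUpos : closure U ⊆ {ξ | ∀ i, 0 < ξ i})
    (v : Fin n → ℤ) (S : Set (Fin n → ℝ))
    (hS : S = {x | ∃ ξ ∈ U, ∃ s : ℝ, 0 < s ∧ s ≤ 1 ∧ x = fun i => s ^ v i * ξ i})
    (α : Fin n → ℤ) :
    (∃ B : ℝ, ∀ x ∈ S, |∏ i, x i ^ α i| ≤ B) ↔ 0 ≤ ∑ i, α i * v i := by
  subst hS
  constructor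
  · rintro ⟨B, hB⟩
    by_contra! hneg
    obtain ⟨ξ, hξ⟩ := hUne
    have hC : 0 < ∏ i, ξ i ^ α i :=
      Finset.prod_pos fun i _ => zpow_pos (hUpos (subset_closure hξ) i) _
    obtain ⟨s, hs, hs1, hlt⟩ := exists_lt_zpow_mul_of_neg hneg hC B
    have hle := hB _ ⟨ξ, hξ, s, hs, hs1, rfl⟩
    rw [prod_zpow_weighted_scaling hs.ne', abs_of_pos (mul_pos (zpow_pos hs _) hC)] at hle
    linarith
  · intro hm
    obtain ⟨B, hB⟩ := hUcpt.exists_bound_abs_prod_zpow hUpos α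
    refine ⟨B, ?_⟩
    rintro x ⟨ξ, hξ, s, hs, hs1, rfl⟩
    have hsm : |s ^ ∑ i, α i * v i| ≤ 1 := by
      rw [abs_of_pos (zpow_pos hs _)]
      exact zpow_le_one₀ hs hs1 hm
    calc |∏ i, (s ^ v i * ξ i) ^ α i|
        = |s ^ ∑ i, α i * v i| * |∏ i, ξ i ^ α i| := by
          rw [prod_zpow_weighted_scaling hs.ne', abs_mul]
      _ ≤ |∏ i, ξ i ^ α i| := mul_le_of_le_one_left (abs_nonneg _) hsm
      _ ≤ B := hB ξ (subset_closure hξ)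

/-- A monomial `x^α` is bounded on the `v`-tentacle `S = {λ_v(s)·ξ : ξ ∈ U, 0 < s ≤ 1}`
(with `U` open, non-empty, with compact closure inside the open positive orthant) if and
only if `⟨α, v⟩ ≥ 0`. -/
theorem stmt_15 (n : ℕ) (U : Set (Fin n → ℝ)) (hUopen : IsOpen U) (hUne : U.Nonempty)
    (hUcpt : IsCompact (closure U))
    (hUpos : closure U ⊆ {ξ | ∀ i, 0 < ξ i})
    (v : Fin n → ℤ) (S : Set (Fin n → ℝ))
    (hS : S = {x | ∃ ξ ∈ U, ∃ s : ℝ, 0 < s ∧ s ≤ 1 ∧ x = fun i => s ^ v i * ξ i})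
    (α : Fin n → ℤ) :
    (∃ B : ℝ, ∀ x ∈ S, |∏ i, x i ^ α i| ≤ B) ↔ 0 ≤ ∑ i, α i * v i :=
  stmt_15_general n U hUne hUcpt hUpos v S hS α
end
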